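/- For every 1 ≤ p < ∞ there exists a constant C > 0 such that for all n ≥ 1 the level-n Schreier graph Γ_n of the Grigorchuk group satisfies λ₁^{(p)}(Γ_n) ≤ C / 2^{np}. -/

import Mathlib

noncomputable section

/-- The generator `a` of the Grigorchuk group acting on finite binary words:
`a(xw) = (1−x)w`. -/
def grigA : List Bool → List Bool
  | [] => []
  | x :: w => (!x) :: w

mutual
  /-- The generator `b`: `b(0w) = 0·a(w)`, `b(1w) = 1·c(w)`. -/
  def grigB : List Bool → List Bool
    | [] => []
    | false :: w => false :: grigA w
    | true :: w => true :: grigC w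
  /-- The generator `c`: `c(0w) = 0·a(w)`, `c(1w) = 1·d(w)`. -/
  def grigC : List Bool → List Bool
    | [] => []
    | false :: w => false :: grigA w
    | true :: w => true :: grigD w
  /-- The generator `d`: `d(0w) = 0·w`, `d(1w) = 1·b(w)`. -/
  def grigD : List Bool → List Bool
    | [] => []
    | false :: w => false :: w
    | true :: w => true :: grigB w
end

/-- The level-`n` Schreier graph `Γ_n` of the Grigorchuk group: vertices are binary words of
length `n`, and distinct `x, y` are adjacent iff `y ∈ {a(x), b(x), c(x), d(x)}`
(the relation is symmetrized; since `a, b, c, d` are involutions it is the same relation). -/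
def grigGraph (n : ℕ) : SimpleGraph (List.Vector Bool n) where
  Adj x y := x ≠ y ∧ ∃ s ∈ [grigA, grigB, grigC, grigD],
    s x.toList = y.toList ∨ s y.toList = x.toList
  symm := by
    constructor
    rintro x y ⟨h1, s, hs, h2⟩
    exact ⟨h1.symm, s, hs, h2.symm⟩
  loopless := ⟨fun x h => h.1 rfl⟩

/-- The first positive eigenvalue `λ₁^{(p)}` of the discrete `p`-Laplacian of the finite graph
with edge multiplicities `ω`, defined via the variational characterization (3). -/
def lambdaOne {V : Type*} [Fintype V] (ω : V → V → ℕ) (p : ℝ) : ℝ :=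
  sInf {r : ℝ | ∃ f : V → ℝ, (¬ ∀ x y : V, f x = f y) ∧
    r = (∑ x : V, ∑ y : V, |f x - f y| ^ p * (ω x y : ℝ)) /
        (⨅ α : ℝ, ∑ x : V, |f x - α| ^ p)}

/-- Edge multiplicities of the level-`n` Schreier graph of the Grigorchuk group:
`ω(x,y) = #{s ∈ {a,b,c,d} : s(x) = y}`. -/
def grigOmega (n : ℕ) (x y : List.Vector Bool n) : ℕ :=
  (([grigA, grigB, grigC, grigD].filter (fun s => s x.toList = y.toList))).length

/-!
`Γ_n` is a path on `2^n` vertices. Numbering its vertices along the path gives a test function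
`f` that every generator changes by at most one, so the numerator of the Rayleigh quotient of
`f` is at most `4 · 2^n`. For any `α`, the positions `k` and `k + 2^(n-1)` are `2^(n-1)` apart,
so one of them is at distance at least `2^(n-2)` from `α`; hence the denominator is at least
`2^(n-1) · (2^(n-2))^p`, and the quotient is at most `8 · 4^p / 2^(np)`.
-/

open Finset

/-- The position of a vertex along the path `Γ_n`: the words `0w, 1w`, joined by `a`, sit at
`2k, 2k+1` where `k` is the position of `w`, in an order that alternates with the parity of `k`. -/
def schreierPos : List Bool → ℕ
  | [] => 0
  | true :: w => 2 * schreierPos w + schreierPos w % 2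
  | false :: w => 2 * schreierPos w + (1 - schreierPos w % 2)

lemma schreierPos_lt (w : List Bool) : schreierPos w < 2 ^ w.length := by
  induction w with
  | nil => simp [schreierPos]
  | cons x w ih =>
    have := Nat.mod_lt (schreierPos w) two_pos
    cases x <;> simp only [schreierPos, List.length_cons, pow_succ] <;> omega

lemma schreierPos_injective_of_length_eq :
    ∀ {w v : List Bool}, w.length = v.length → schreierPos w = schreierPos v → w = v
  | [], [], _, _ => rfl
  | x :: w, y :: v, hl, hpos => by
    have hw := Nat.mod_lt (schreierPos w) two_pos
    have hv := Nat.mod_lt (schreierPos v) two_pos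
    have hwv : schreierPos w = schreierPos v := by
      cases x <;> cases y <;> simp only [schreierPos] at hpos <;> omega
    have hxy : x = y := by
      cases x <;> cases y <;> simp only [schreierPos] at hpos <;> first | rfl | omega
    rw [hxy, schreierPos_injective_of_length_eq (Nat.succ.inj hl) hwv]

lemma image_schreierPos (n : ℕ) :
    univ.image (fun x : List.Vector Bool n => schreierPos x.toList) = range (2 ^ n) := by
  refine eq_of_subset_of_card_le (fun k hk => ?_) ?_
  · obtain ⟨x, -, rfl⟩ := mem_image.mp hk
    simpa [x.toList_length] using schreierPos_lt x.toList
  · rw [card_range, card_image_of_injective _ fun x y h =>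
      List.Vector.toList_injective (schreierPos_injective_of_length_eq (by simp) h)]
    simp

lemma exists_schreierPos_eq {n k : ℕ} (hk : k < 2 ^ n) :
    ∃ x : List.Vector Bool n, schreierPos x.toList = k := by
  have := mem_range.mpr hk
  rw [← image_schreierPos] at this
  simpa using this

lemma not_forall_schreierPos_eq (m : ℕ) :
    ¬ ∀ x y : List.Vector Bool (m + 1), (schreierPos x.toList : ℝ) = schreierPos y.toList := by
  obtain ⟨x, hx⟩ := exists_schreierPos_eq (Nat.two_pow_pos (m + 1))
  obtain ⟨y, hy⟩ := exists_schreierPos_eq (Nat.one_lt_two_pow (Nat.succ_ne_zero m))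
  intro h
  simpa [hx, hy] using h x y

lemma sum_comp_schreierPos {n : ℕ} (g : ℕ → ℝ) :
    ∑ x : List.Vector Bool n, g (schreierPos x.toList) = ∑ k ∈ range (2 ^ n), g k := by
  rw [← image_schreierPos, sum_image fun x _ y _ h =>
    List.Vector.toList_injective (schreierPos_injective_of_length_eq (by simp) h)]

/-- The parity `r` of the smaller position records which generators can join two consecutive
positions: `a` joins `2j, 2j+1`, while `b, c, d` join `2j+1, 2j+2`. -/
def IsPathStep (r k k' : ℕ) : Prop :=
  k' = k ∨ (k' = k + 1 ∧ k % 2 = r) ∨ (k = k' + 1 ∧ k' % 2 = r)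

lemma IsPathStep.abs_sub_le_one {r k k' : ℕ} (h : IsPathStep r k k') :
    |(k' : ℝ) - k| ≤ 1 := by
  rw [abs_le]
  rcases h with rfl | ⟨rfl, -⟩ | ⟨rfl, -⟩ <;> push_cast <;> constructor <;> linarith

lemma schreierPos_grigA (w : List Bool) :
    IsPathStep 0 (schreierPos w) (schreierPos (grigA w)) := by
  unfold IsPathStep
  cases w with
  | nil => simp [grigA]
  | cons x w =>
    cases x <;> simp only [grigA, Bool.not_false, Bool.not_true, schreierPos] <;> omega

lemma IsPathStep.cons_true {k k' : ℕ} (h : IsPathStep 1 k k') :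
    IsPathStep 1 (2 * k + k % 2) (2 * k' + k' % 2) := by
  unfold IsPathStep at *; omega

lemma IsPathStep.cons_false {k k' : ℕ} (h : IsPathStep 0 k k') :
    IsPathStep 1 (2 * k + (1 - k % 2)) (2 * k' + (1 - k' % 2)) := by
  unfold IsPathStep at *; omega

lemma schreierPos_grigBCD (w : List Bool) :
    IsPathStep 1 (schreierPos w) (schreierPos (grigB w)) ∧
      IsPathStep 1 (schreierPos w) (schreierPos (grigC w)) ∧
      IsPathStep 1 (schreierPos w) (schreierPos (grigD w)) := by
  induction w with
  | nil => exact ⟨Or.inl rfl, Or.inl rfl, Or.inl rfl⟩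
  | cons x w ih =>
    obtain ⟨hb, hc, hd⟩ := ih
    cases x
    · exact ⟨(schreierPos_grigA w).cons_false, (schreierPos_grigA w).cons_false, Or.inl rfl⟩
    · exact ⟨hc.cons_true, hd.cons_true, hb.cons_true⟩

lemma abs_schreierPos_sub_le_one {s : List Bool → List Bool}
    (hs : s ∈ [grigA, grigB, grigC, grigD]) (w : List Bool) :
    |(schreierPos (s w) : ℝ) - schreierPos w| ≤ 1 := by
  simp only [List.mem_cons, List.not_mem_nil, or_false] at hs
  rcases hs with rfl | rfl | rfl | rfl
  · exact (schreierPos_grigA w).abs_sub_le_one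
  · exact (schreierPos_grigBCD w).1.abs_sub_le_one
  · exact (schreierPos_grigBCD w).2.1.abs_sub_le_one
  · exact (schreierPos_grigBCD w).2.2.abs_sub_le_one

lemma abs_schreierPos_sub_le_one_of_grigOmega_ne_zero {n : ℕ} {x y : List.Vector Bool n}
    (h : grigOmega n x y ≠ 0) : |(schreierPos x.toList : ℝ) - schreierPos y.toList| ≤ 1 := by
  obtain ⟨s, hs⟩ := List.exists_mem_of_length_pos (Nat.pos_of_ne_zero h)
  obtain ⟨hmem, hsxy⟩ := List.mem_filter.mp hs
  rw [abs_sub_comm, ← of_decide_eq_true hsxy]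
  exact abs_schreierPos_sub_le_one hmem x.toList

lemma sum_length_filter_toList_eq_le {n : ℕ} (L : List (List Bool → List Bool))
    (x : List.Vector Bool n) :
    ∑ y : List.Vector Bool n, (L.filter fun s => s x.toList = y.toList).length ≤ L.length := by
  simp only [← List.countP_eq_length_filter]
  induction L with
  | nil => simp
  | cons s L ih =>
    have hs : #{y : List.Vector Bool n | s x.toList = y.toList} ≤ 1 :=
      card_le_one.mpr fun y hy z hz => List.Vector.toList_injective <| by
        rw [← (mem_filter.mp hy).2, ← (mem_filter.mp hz).2]
    simp only [List.countP_cons, sum_add_distrib, decide_eq_true_eq, sum_boole, Nat.cast_id,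
      List.length_cons]
    omega

lemma sum_sum_grigOmega_le (n : ℕ) :
    ∑ x : List.Vector Bool n, ∑ y, (grigOmega n x y : ℝ) ≤ 4 * 2 ^ n := by
  have h : ∀ x : List.Vector Bool n, ∑ y, grigOmega n x y ≤ 4 := fun x =>
    sum_length_filter_toList_eq_le _ x
  calc ∑ x : List.Vector Bool n, ∑ y, (grigOmega n x y : ℝ)
      ≤ ∑ _x : List.Vector Bool n, (4 : ℝ) := sum_le_sum fun x _ => by exact_mod_cast h x
    _ = 4 * 2 ^ n := by simp [mul_comm]

lemma sum_sum_abs_sub_rpow_mul_le {V : Type*} [Fintype V] (ω : V → V → ℕ) {p : ℝ} (hp : 0 ≤ p)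
    {f : V → ℝ} (hf : ∀ x y, ω x y ≠ 0 → |f x - f y| ≤ 1) :
    ∑ x, ∑ y, |f x - f y| ^ p * (ω x y : ℝ) ≤ ∑ x, ∑ y, (ω x y : ℝ) := by
  refine sum_le_sum fun x _ => sum_le_sum fun y _ => ?_
  by_cases h : ω x y = 0
  · simp [h]
  · exact mul_le_of_le_one_left (Nat.cast_nonneg _)
      (Real.rpow_le_one (abs_nonneg _) (hf x y h) hp)

lemma mul_rpow_le_sum_range_abs_sub_rpow (M : ℕ) (α : ℝ) {p : ℝ} (hp : 0 ≤ p) :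
    M * ((M : ℝ) / 2) ^ p ≤ ∑ k ∈ range (2 * M), |(k : ℝ) - α| ^ p := by
  rw [two_mul, sum_range_add, ← sum_add_distrib]
  calc (M : ℝ) * ((M : ℝ) / 2) ^ p = ∑ _k ∈ range M, ((M : ℝ) / 2) ^ p := by simp
    _ ≤ _ := sum_le_sum fun k _ => ?_
  have hfar : (M : ℝ) / 2 ≤ |(k : ℝ) - α| ∨ (M : ℝ) / 2 ≤ |((M + k : ℕ) : ℝ) - α| := by
    by_contra! h
    rw [abs_lt, abs_lt] at h
    push_cast at h
    linarith
  have h1 := Real.rpow_nonneg (abs_nonneg ((k : ℝ) - α)) p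
  have h2 := Real.rpow_nonneg (abs_nonneg (((M + k : ℕ) : ℝ) - α)) p
  rcases hfar with hfar | hfar <;> linarith [Real.rpow_le_rpow (by positivity) hfar hp]

lemma lambdaOne_le {V : Type*} [Fintype V] (ω : V → V → ℕ) (p : ℝ) {f : V → ℝ}
    (hf : ¬ ∀ x y, f x = f y) :
    lambdaOne ω p ≤ (∑ x, ∑ y, |f x - f y| ^ p * (ω x y : ℝ)) /
      (⨅ α : ℝ, ∑ x, |f x - α| ^ p) := by
  refine csInf_le ⟨0, ?_⟩ ⟨f, hf, rfl⟩
  rintro r ⟨g, -, rfl⟩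
  exact div_nonneg (sum_nonneg fun x _ => sum_nonneg fun y _ =>
      mul_nonneg (Real.rpow_nonneg (abs_nonneg _) p) (Nat.cast_nonneg _))
    (Real.iInf_nonneg fun α => sum_nonneg fun x _ => Real.rpow_nonneg (abs_nonneg _) p)

lemma four_mul_two_pow_succ_div_eq (m : ℕ) (p : ℝ) :
    4 * 2 ^ (m + 1) / ((2 ^ m : ℕ) * (((2 ^ m : ℕ) : ℝ) / 2) ^ p) =
      8 * 4 ^ p / 2 ^ (((m + 1 : ℕ) : ℝ) * p) := by
  have h : (2 : ℝ) ^ (((m + 1 : ℕ) : ℝ) * p) = 4 ^ p * ((2 ^ m : ℝ) / 2) ^ p := by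
    rw [Real.rpow_mul zero_le_two, Real.rpow_natCast, ← Real.mul_rpow (by norm_num)
      (by positivity), pow_succ]
    ring_nf
  rw [h]
  push_cast
  field_simp
  ring

/-- Proposition 9: for each `1 ≤ p < ∞` there is `C > 0` such that the
`p`-spectral gap of the Schreier graphs `Γ_n` of the Grigorchuk group satisfies
`λ₁^{(p)}(Γ_n) ≤ C / 2^{np}`. -/
theorem statement_8 (p : ℝ) (hp : 1 ≤ p) :
    ∃ C : ℝ, 0 < C ∧ ∀ n : ℕ, 1 ≤ n →
      lambdaOne (grigOmega n) p ≤ C / 2 ^ ((n : ℝ) * p) := by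
  have hp0 : 0 ≤ p := by linarith
  refine ⟨8 * 4 ^ p, by positivity, fun n hn => ?_⟩
  obtain ⟨m, rfl⟩ : ∃ m, n = m + 1 := ⟨n - 1, by omega⟩
  set f : List.Vector Bool (m + 1) → ℝ := fun x => schreierPos x.toList
  have hnum : ∑ x, ∑ y, |f x - f y| ^ p * (grigOmega (m + 1) x y : ℝ) ≤ 4 * 2 ^ (m + 1) :=
    (sum_sum_abs_sub_rpow_mul_le (grigOmega (m + 1)) hp0 (f := f) fun _ _ =>
      abs_schreierPos_sub_le_one_of_grigOmega_ne_zero).trans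
      (sum_sum_grigOmega_le _)
  have hden : (2 ^ m : ℕ) * (((2 ^ m : ℕ) : ℝ) / 2) ^ p ≤ ⨅ α : ℝ, ∑ x, |f x - α| ^ p :=
    le_ciInf fun α => by
      rw [sum_comp_schreierPos (fun k => |(k : ℝ) - α| ^ p), pow_succ']
      exact mul_rpow_le_sum_range_abs_sub_rpow _ α hp0
  calc lambdaOne (grigOmega (m + 1)) p
      ≤ (∑ x, ∑ y, |f x - f y| ^ p * (grigOmega (m + 1) x y : ℝ)) /
          ⨅ α : ℝ, ∑ x, |f x - α| ^ p := lambdaOne_le _ p (not_forall_schreierPos_eq m)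
    _ ≤ 4 * 2 ^ (m + 1) / ((2 ^ m : ℕ) * (((2 ^ m : ℕ) : ℝ) / 2) ^ p) :=
      div_le_div₀ (by positivity) hnum (by positivity) hden
    _ = 8 * 4 ^ p / 2 ^ (((m + 1 : ℕ) : ℝ) * p) := four_mul_two_pow_succ_div_eq m p
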